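/- arXiv:1703.08337 — 2 statements merged into one kernel-verified Lean document; each statement's English description precedes it below -/
import Mathlib

section
/- Let m be a natural number and for each j ∈ Fin m let α_j > 0, Λ_j ≥ 0, β_j ≥ 0, c_j ≥ 0, and fix x ∈ ℝ. Define g_j(t) = −t² + (α_j − Λ_j) t − Λ_j α_j (e^{β_j t} − 1), and let S = {t ∈ ℝ^m : for all j, t_j > 0 and g_j(t_j) > 0}. Then the function F(t) = Σ_{j=1}^m c_j · α_j t_j e^{(β_j − x) t_j} / g_j(t_j) is convex on S (in particular S is a convex subset of ℝ^m). -/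
/-!
For `t > 0` the denominator factors as `g(t) = t q(t)` with
`q(t) = α - Λ - t - Λα (e^{βt} - 1)/t`. The slope `(e^{βt} - 1)/t` is convex: its second
derivative is `(e^u (u² - 2u + 2) - 2)/t³` with `u = βt ≥ 0`. So `q` is concave, the feasible
set `{t > 0, q(t) > 0}` is convex, and each summand `cα e^{(β - x)t}/q(t)` is the exponential of
the convex function `(β - x)t - log q(t)`.
-/

open Real Set

theorem convexOn_sum_comp_apply {ι 𝕜 β : Type*} {E : ι → Type*} [Fintype ι] [Semiring 𝕜]
    [PartialOrder 𝕜] [∀ i, AddCommMonoid (E i)] [∀ i, SMul 𝕜 (E i)] [AddCommMonoid β]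
    [PartialOrder β] [IsOrderedAddMonoid β] [DistribSMul 𝕜 β] {s : ∀ i, Set (E i)}
    {f : ∀ i, E i → β} (hf : ∀ i, ConvexOn 𝕜 (s i) (f i)) :
    ConvexOn 𝕜 {t : ∀ i, E i | ∀ i, t i ∈ s i} fun t => ∑ i, f i (t i) := by
  refine ⟨fun t ht u hu a b ha hb hab i => (hf i).1 (ht i) (hu i) ha hb hab,
    fun t ht u hu a b ha hb hab => ?_⟩
  calc ∑ i, f i (a • t i + b • u i)
      ≤ ∑ i, (a • f i (t i) + b • f i (u i)) :=
        Finset.sum_le_sum fun i _ => (hf i).2 (ht i) (hu i) ha hb hab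
    _ = a • ∑ i, f i (t i) + b • ∑ i, f i (u i) := by
        rw [Finset.sum_add_distrib, Finset.smul_sum, Finset.smul_sum]

section
variable {E : Type*} [AddCommGroup E] [Module ℝ E] {s : Set E} {f q : E → ℝ}

theorem ConcaveOn.log_comp (hq : ConcaveOn ℝ s q) (hq₀ : ∀ x ∈ s, 0 < q x) :
    ConcaveOn ℝ s fun x => log (q x) := by
  refine ⟨hq.1, fun x hx y hy a b ha hb hab => ?_⟩
  have hpos : 0 < a • q x + b • q y := convex_Ioi (0 : ℝ) (hq₀ x hx) (hq₀ y hy) ha hb hab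
  calc a • log (q x) + b • log (q y) ≤ log (a • q x + b • q y) :=
        strictConcaveOn_log_Ioi.concaveOn.2 (hq₀ x hx) (hq₀ y hy) ha hb hab
    _ ≤ log (q (a • x + b • y)) := log_le_log hpos (hq.2 hx hy ha hb hab)

theorem ConvexOn.exp_comp (hf : ConvexOn ℝ s f) : ConvexOn ℝ s fun x => exp (f x) :=
  ⟨hf.1, fun _ hx _ hy _ _ ha hb hab => (exp_le_exp.2 (hf.2 hx hy ha hb hab)).trans
    (convexOn_exp.2 (mem_univ _) (mem_univ _) ha hb hab)⟩

theorem ConvexOn.exp_div_of_concaveOn (hf : ConvexOn ℝ s f) (hq : ConcaveOn ℝ s q)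
    (hq₀ : ∀ x ∈ s, 0 < q x) : ConvexOn ℝ s fun x => exp (f x) / q x :=
  (hf.sub (hq.log_comp hq₀)).exp_comp.congr fun x hx => by
    simp only [Pi.sub_apply, exp_sub, exp_log (hq₀ x hx)]

end

theorem two_le_exp_mul_sq_sub_two_mul_add_two {u : ℝ} (hu : 0 ≤ u) :
    2 ≤ exp u * (u ^ 2 - 2 * u + 2) := by
  -- `(1 + u + u²/2) (u² - 2u + 2) = 2 + u⁴/2`
  have hq : 0 ≤ u ^ 2 - 2 * u + 2 := by nlinarith [sq_nonneg (u - 1)]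
  nlinarith [mul_le_mul_of_nonneg_right (quadratic_le_exp_of_nonneg hu) hq, pow_nonneg hu 4]

theorem convexOn_exp_mul_sub_one_div {β : ℝ} (hβ : 0 ≤ β) :
    ConvexOn ℝ (Ioi 0) fun t => (exp (β * t) - 1) / t := by
  have hexp (t : ℝ) : HasDerivAt (fun s => exp (β * s)) (exp (β * t) * β) t := by
    simpa using ((hasDerivAt_id t).const_mul β).exp
  refine convexOn_of_hasDerivWithinAt2_nonneg (convex_Ioi 0)
    (f' := fun t => (β * t * exp (β * t) - (exp (β * t) - 1)) / t ^ 2)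
    (f'' := fun t => (exp (β * t) * ((β * t) ^ 2 - 2 * (β * t) + 2) - 2) / t ^ 3)
    (ContinuousOn.div (by fun_prop) continuousOn_id fun t ht => ht.ne') ?_ ?_ ?_ <;>
    simp only [interior_Ioi, mem_Ioi]
  · intro t ht
    refine (((hexp t).sub_const 1).div (hasDerivAt_id t) ht.ne').hasDerivWithinAt.congr_deriv ?_
    simp only [id]
    ring
  · intro t ht
    have hnum := (((hasDerivAt_id' t).const_mul β).mul (hexp t)).sub ((hexp t).sub_const 1)
    refine (hnum.div (hasDerivAt_pow 2 t) (pow_ne_zero 2 ht.ne')).hasDerivWithinAt.congr_deriv ?_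
    simp only [Pi.sub_apply, Pi.mul_apply]
    field_simp
    ring
  · intro t ht
    exact div_nonneg (sub_nonneg.2 (two_le_exp_mul_sq_sub_two_mul_add_two (by positivity)))
      (by positivity)

theorem convexOn_wltp_term {α Λ β c : ℝ} (x : ℝ) (hα : 0 ≤ α) (hΛ : 0 ≤ Λ) (hβ : 0 ≤ β)
    (hc : 0 ≤ c) :
    ConvexOn ℝ {t | 0 < t ∧ 0 < -t ^ 2 + (α - Λ) * t - Λ * α * (exp (β * t) - 1)}
      fun t => c * (α * t * exp ((β - x) * t) /
        (-t ^ 2 + (α - Λ) * t - Λ * α * (exp (β * t) - 1))) := by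
  set q : ℝ → ℝ := fun t => α - Λ - t - Λ * α * ((exp (β * t) - 1) / t)
  have hq : ConcaveOn ℝ (Ioi 0) q :=
    ((concaveOn_const _ (convex_Ioi 0)).sub (convexOn_id (convex_Ioi 0))).sub
      ((convexOn_exp_mul_sub_one_div hβ).smul (by positivity))
  have hfactor : ∀ t, 0 < t → -t ^ 2 + (α - Λ) * t - Λ * α * (exp (β * t) - 1) = t * q t := by
    intro t ht
    simp only [q]
    field_simp
    ring
  have hset : {t | 0 < t ∧ 0 < -t ^ 2 + (α - Λ) * t - Λ * α * (exp (β * t) - 1)} =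
      {t ∈ Set.Ioi 0 | 0 < q t} := by
    ext t
    exact and_congr_right fun ht => by rw [hfactor t ht, mul_pos_iff_of_pos_left ht]
  rw [hset]
  have hlin : ConvexOn ℝ {t ∈ Set.Ioi 0 | 0 < q t} fun t => (β - x) * t :=
    (LinearMap.mul ℝ ℝ (β - x)).convexOn (hq.convex_gt 0)
  refine ((hlin.exp_div_of_concaveOn (hq.subset (sep_subset _ _) (hq.convex_gt 0))
    fun t ht => ht.2).smul (mul_nonneg hc hα)).congr fun t ht => ?_
  simp only [smul_eq_mul]
  have ht₀ : t ≠ 0 := (Set.mem_Ioi.1 ht.1).ne'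
  rw [hfactor t ht.1]
  field_simp

/-- Theorem 3: the WLTP objective
`F(t) = Σ_j c_j · α_j t_j e^{(β_j − x)t_j} / g_j(t_j)`, with
`g_j(t) = −t² + (α_j − Λ_j)t − Λ_jα_j(e^{β_j t} − 1)`, is convex in the vector
`t = (t_1, …, t_m)` on the feasible region
`S = {t : ∀ j, t_j > 0 and g_j(t_j) > 0}`. -/
theorem objective_convex_in_t (m : ℕ) (α Λ β c : Fin m → ℝ) (x : ℝ)
    (hα : ∀ j, 0 < α j) (hΛ : ∀ j, 0 ≤ Λ j) (hβ : ∀ j, 0 ≤ β j)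
    (hc : ∀ j, 0 ≤ c j) :
    ConvexOn ℝ
      {t : Fin m → ℝ | ∀ j, 0 < t j ∧
        0 < -(t j) ^ 2 + (α j - Λ j) * t j
              - Λ j * α j * (Real.exp (β j * t j) - 1)}
      (fun t : Fin m → ℝ => ∑ j : Fin m,
        c j * (α j * t j * Real.exp ((β j - x) * t j) /
          (-(t j) ^ 2 + (α j - Λ j) * t j
            - Λ j * α j * (Real.exp (β j * t j) - 1)))) := by
  exact convexOn_sum_comp_apply fun j => convexOn_wltp_term x (hα j).le (hΛ j) (hβ j) (hc j)
end

section
/- Let r, m be natural numbers, let λ_i ≥ 0 for i ∈ Fin r, and for each j ∈ Fin m let K_j ≥ 0 and 0 ≤ C₁_j ≤ C₂_j with C₂_j > 0. For a matrix π ∈ ℝ^{r×m} write Λ_j(π) = Σ_{i=1}^r λ_i π_{i j}, and define D = {π ∈ ℝ^{r×m} : π_{i j} ≥ 0 for all i, j, and C₂_j · Λ_j(π) < 1 for all j}. Then the function F(π) = Σ_{j=1}^m K_j · Λ_j(π) (1 − C₁_j Λ_j(π)) / (1 − C₂_j Λ_j(π)) is convex on D (in particular D is a convex subset of ℝ^{r×m}).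 -/
/-!
Each summand is `K_j · g(Λ_j(π))` with `Λ_j` linear in `π` and
`g(t) = t (1 - a t) / (1 - c t)`, `a ≤ c`. For `c ≠ 0`,
`g(t) = (c - a)/c² · (1 - c t)⁻¹ + (a/c) t - (c - a)/c²`: a nonnegative multiple of the inverse
of a positive affine function plus an affine function, hence convex on `{c t < 1}`
(for `c = 0`, `g(t) = t - a t²` with `a ≤ 0`). Convexity survives precomposition with the linear
maps `Λ_j`, nonnegative scaling by `K_j` and summation over `j`.
-/

open Finset Set

theorem convexOn_inv_one_sub_mul (c : ℝ) :
    ConvexOn ℝ {t : ℝ | c * t < 1} fun t => (1 - c * t)⁻¹ := by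
  let g : ℝ →ᵃ[ℝ] ℝ := AffineMap.const ℝ ℝ 1 - c • AffineMap.id ℝ ℝ
  have hg : {t : ℝ | c * t < 1} = g ⁻¹' Ioi 0 := by ext t; simp [g]
  rw [hg]
  exact ((convexOn_zpow (-1)).comp_affineMap g).congr fun t _ => by simp [g]

theorem mul_one_sub_div_one_sub_eq {a c t : ℝ} (hc : c ≠ 0) (ht : c * t ≠ 1) :
    t * (1 - a * t) / (1 - c * t)
      = (c - a) / c ^ 2 * (1 - c * t)⁻¹ + a / c * t - (c - a) / c ^ 2 := by
  have : 1 - c * t ≠ 0 := sub_ne_zero.2 ht.symm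
  have : 1 - t * c ≠ 0 := by rwa [mul_comm]
  field_simp
  ring

theorem convexOn_mul_one_sub_div_one_sub {a c : ℝ} (hac : a ≤ c) :
    ConvexOn ℝ {t : ℝ | c * t < 1} fun t => t * (1 - a * t) / (1 - c * t) := by
  rcases eq_or_ne c 0 with rfl | hc
  · simp only [zero_mul, zero_lt_one, ofPred_true]
    refine ((convexOn_id convex_univ).add (even_two.convexOn_pow.smul (neg_nonneg.2 hac))).congr
      fun t _ => ?_
    simp only [smul_eq_mul, neg_mul, Pi.add_apply, id_eq, sub_zero, div_one]
    ring
  · have hconv : Convex ℝ {t : ℝ | c * t < 1} := (convexOn_inv_one_sub_mul c).1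
    have hA : 0 ≤ (c - a) / c ^ 2 := div_nonneg (sub_nonneg.2 hac) (sq_nonneg c)
    refine ((((convexOn_inv_one_sub_mul c).smul hA).add
      (((a / c) • LinearMap.id (R := ℝ) (M := ℝ)).convexOn hconv)).add_const
      (-((c - a) / c ^ 2))).congr fun t ht => ?_
    simp only [Pi.add_apply, smul_eq_mul, LinearMap.smul_apply, LinearMap.id_apply]
    rw [mul_one_sub_div_one_sub_eq hc ht.ne]
    ring

theorem ConvexOn.sum {𝕜 E β ι : Type*} [Semiring 𝕜] [PartialOrder 𝕜] [AddCommMonoid E]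
    [AddCommMonoid β] [PartialOrder β] [IsOrderedAddMonoid β] [SMul 𝕜 E] [Module 𝕜 β]
    {S : Set E} {s : Finset ι} {f : ι → E → β} (hS : Convex 𝕜 S)
    (hf : ∀ i ∈ s, ConvexOn 𝕜 S (f i)) : ConvexOn 𝕜 S fun x => ∑ i ∈ s, f i x := by
  classical
  induction s using Finset.induction_on with
  | empty => simpa using convexOn_const (0 : β) hS
  | insert i s hi ih =>
    simp only [Finset.sum_insert hi]
    exact (hf i (mem_insert_self i s)).add (ih fun j hj => hf j (mem_insert_of_mem hj))

def arrivalRate {ι κ : Type*} [Fintype ι] (lam : ι → ℝ) (j : κ) : (ι → κ → ℝ) →ₗ[ℝ] ℝ where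
  toFun π := ∑ i, lam i * π i j
  map_add' π σ := by simp only [Pi.add_apply, mul_add, sum_add_distrib]
  map_smul' a π := by
    simp only [Pi.smul_apply, smul_eq_mul, mul_sum, RingHom.id_apply, mul_left_comm]

theorem objective_convex_in_pi_general (r m : ℕ) (lam : Fin r → ℝ)
    (K C₁ C₂ : Fin m → ℝ)
    (hK : ∀ j, 0 ≤ K j) (hC₁₂ : ∀ j, C₁ j ≤ C₂ j) :
    ConvexOn ℝ
      {π : Fin r → Fin m → ℝ | (∀ i j, 0 ≤ π i j) ∧
        ∀ j, C₂ j * (∑ i : Fin r, lam i * π i j) < 1}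
      (fun π : Fin r → Fin m → ℝ => ∑ j : Fin m,
        K j * ((∑ i : Fin r, lam i * π i j) *
          (1 - C₁ j * (∑ i : Fin r, lam i * π i j)) /
          (1 - C₂ j * (∑ i : Fin r, lam i * π i j)))) := by
  have hterm (j : Fin m) :=
    ((convexOn_mul_one_sub_div_one_sub (hC₁₂ j)).smul (hK j)).comp_linearMap (arrivalRate lam j)
  have hS : Convex ℝ (⋂ j, arrivalRate lam j ⁻¹' {t | C₂ j * t < 1}) :=
    convex_iInter fun j => (hterm j).1
  refine (ConvexOn.sum hS fun j _ => (hterm j).subset (iInter_subset _ j) hS).subset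
    (fun π hπ => mem_iInter.2 hπ.2) ?_
  intro π hπ σ hσ a b ha hb hab
  exact ⟨fun i j => add_nonneg (mul_nonneg ha (hπ.1 i j)) (mul_nonneg hb (hσ.1 i j)),
    fun j => mem_iInter.1 (hS (mem_iInter.2 hπ.2) (mem_iInter.2 hσ.2) ha hb hab) j⟩

/-- Theorem 4: with `Λ_j(π) = Σ_i λ_i π_{ij}`, the WLTP objective
`F(π) = Σ_j K_j Λ_j(π)(1 − C₁_j Λ_j(π))/(1 − C₂_j Λ_j(π))` is convex in the
scheduling probabilities `π` on the region
`D = {π : π_{ij} ≥ 0, C₂_j Λ_j(π) < 1}`. -/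
theorem objective_convex_in_pi (r m : ℕ) (lam : Fin r → ℝ)
    (hlam : ∀ i, 0 ≤ lam i) (K C₁ C₂ : Fin m → ℝ)
    (hK : ∀ j, 0 ≤ K j) (hC₁ : ∀ j, 0 ≤ C₁ j) (hC₁₂ : ∀ j, C₁ j ≤ C₂ j)
    (hC₂ : ∀ j, 0 < C₂ j) :
    ConvexOn ℝ
      {π : Fin r → Fin m → ℝ | (∀ i j, 0 ≤ π i j) ∧
        ∀ j, C₂ j * (∑ i : Fin r, lam i * π i j) < 1}
      (fun π : Fin r → Fin m → ℝ => ∑ j : Fin m,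
        K j * ((∑ i : Fin r, lam i * π i j) *
          (1 - C₁ j * (∑ i : Fin r, lam i * π i j)) /
          (1 - C₂ j * (∑ i : Fin r, lam i * π i j)))) :=
  objective_convex_in_pi_general r m lam K C₁ C₂ hK hC₁₂
end
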